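/- arXiv:math/0411039 — 2 statements merged into one kernel-verified Lean document; each statement's English description precedes it below -/
import Mathlib

section
/- Let r be a k-local geodesic in a δ-hyperbolic geodesic metric space with k > 8δ. Then r is a (1/3, 2δ)-quasi-geodesic. -/
open Set

/-- `s` is the image of a geodesic segment from `x` to `y`. -/
def IsGeodesicSegment {M : Type*} [MetricSpace M] (s : Set M) (x y : M) : Prop :=
  ∃ f : ℝ → M, f 0 = x ∧ f (dist x y) = y ∧
    (∀ u ∈ Icc (0 : ℝ) (dist x y), ∀ v ∈ Icc (0 : ℝ) (dist x y),
      dist (f u) (f v) = |u - v|) ∧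
    s = f '' Icc (0 : ℝ) (dist x y)

/-- `M` is δ-hyperbolic (thin geodesic triangles). -/
def IsDeltaHyperbolic (M : Type*) [MetricSpace M] (δ : ℝ) : Prop :=
  ∀ (x y z : M) (a b c : Set M),
    IsGeodesicSegment a x y → IsGeodesicSegment b y z → IsGeodesicSegment c z x →
    ∀ p ∈ a, ∃ q ∈ b ∪ c, dist p q ≤ δ

open Metric

/-!
Fix a geodesic `g` from `r s` to `r t` and a parameter `u₀ ∈ [s, t]` at which `r u₀` is farthest
from `g`. The piece of `r` of length `k` centred at `u₀` is a geodesic. Closing it up with a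
nearest-point segment to `g` gives a thin triangle, and possibly a second one along `g`, so `r u₀`
lies near a nearest-point segment from an endpoint of the piece. If `r u₀` were farther than
`2δ` from `g`, that endpoint would be even farther, unless it is an endpoint of `r` itself;
this is where `k > 8δ` enters. So all of `r` lies within `2δ` of `g`. A step of length `3k/4`
along `r` then advances at least `3k/4 - 4δ ≥ k/4` along `g`, and induction on the number of
steps gives the factor `1/3`.
-/

section

variable {M : Type*} [MetricSpace M]

theorem isGeodesicSegment_image_Icc {f : ℝ → M} {a b : ℝ} (hab : a ≤ b)
    (hf : ∀ u ∈ Icc a b, ∀ v ∈ Icc a b, dist (f u) (f v) = |u - v|) :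
    IsGeodesicSegment (f '' Icc a b) (f a) (f b) := by
  have hd : dist (f a) (f b) = b - a := by
    rw [hf a ⟨le_rfl, hab⟩ b ⟨hab, le_rfl⟩, abs_sub_comm, abs_of_nonneg (sub_nonneg.2 hab)]
  refine ⟨fun v => f (a + v), by simp, by simp [hd], fun u hu v hv => ?_, ?_⟩
  · rw [hd] at hu hv
    rw [hf _ ⟨by linarith [hu.1], by linarith [hu.2]⟩ _ ⟨by linarith [hv.1], by linarith [hv.2]⟩,
      add_sub_add_left_eq_sub]
  · rw [hd, show (fun v => f (a + v)) = f ∘ (a + ·) from rfl, image_comp, image_const_add_Icc,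
      add_zero, add_sub_cancel]

namespace IsGeodesicSegment

variable {s : Set M} {x y : M}

theorem dist_add_dist (h : IsGeodesicSegment s x y) {p : M} (hp : p ∈ s) :
    dist x p + dist p y = dist x y := by
  obtain ⟨f, hf0, hfD, hf, rfl⟩ := h
  obtain ⟨v, hv, rfl⟩ := hp
  have h0 : (0 : ℝ) ∈ Icc 0 (dist x y) := ⟨le_rfl, dist_nonneg⟩
  have hD : dist x y ∈ Icc 0 (dist x y) := ⟨dist_nonneg, le_rfl⟩
  have hxv : dist x (f v) = v := by
    rw [← hf0, hf 0 h0 v hv, zero_sub, abs_neg, abs_of_nonneg hv.1]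
  have hvy : dist (f v) y = dist x y - v := by
    conv_lhs => rw [← hfD]
    rw [hf v hv _ hD, abs_sub_comm, abs_of_nonneg (sub_nonneg.2 hv.2)]
  rw [hxv, hvy, add_sub_cancel]

theorem left_mem (h : IsGeodesicSegment s x y) : x ∈ s := by
  obtain ⟨f, hf0, -, -, rfl⟩ := h
  exact ⟨0, ⟨le_rfl, dist_nonneg⟩, hf0⟩

theorem isCompact (h : IsGeodesicSegment s x y) : IsCompact s := by
  obtain ⟨f, -, -, hf, rfl⟩ := h
  have hlip : LipschitzOnWith 1 f (Icc 0 (dist x y)) :=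
    LipschitzOnWith.of_dist_le_mul fun u hu v hv => by rw [hf u hu v hv, Real.dist_eq]; simp
  exact isCompact_Icc.image_of_continuousOn hlip.continuousOn

theorem symm (h : IsGeodesicSegment s x y) : IsGeodesicSegment s y x := by
  obtain ⟨f, hf0, hfD, hf, rfl⟩ := h
  have hrev := isGeodesicSegment_image_Icc (f := fun v => f (-v))
    (neg_nonpos.2 (dist_nonneg (x := x) (y := y))) fun u hu v hv => by
      rw [hf _ ⟨neg_nonneg.2 hu.2, neg_le.1 hu.1⟩ _ ⟨neg_nonneg.2 hv.2, neg_le.1 hv.1⟩, ← abs_neg]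
      ring_nf
  simp only [neg_neg, neg_zero, hf0, hfD] at hrev
  rwa [show (fun v => f (-v)) = f ∘ Neg.neg from rfl, image_comp, image_neg_Icc, neg_neg,
    neg_zero] at hrev

theorem exists_subsegment (h : IsGeodesicSegment s x y) {y' z' : M}
    (hy' : y' ∈ s) (hz' : z' ∈ s) : ∃ s' ⊆ s, IsGeodesicSegment s' y' z' := by
  obtain ⟨f, -, -, hf, rfl⟩ := h
  obtain ⟨u, hu, rfl⟩ := hy'
  obtain ⟨v, hv, rfl⟩ := hz'
  wlog huv : u ≤ v generalizing u v
  · obtain ⟨s', hs', h'⟩ := this v hv u hu (le_of_not_ge huv)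
    exact ⟨s', hs', h'.symm⟩
  have hsub : Icc u v ⊆ Icc 0 (dist x y) := Icc_subset_Icc hu.1 hv.2
  exact ⟨f '' Icc u v, image_mono hsub,
    isGeodesicSegment_image_Icc huv fun a ha b hb => hf a (hsub ha) b (hsub hb)⟩

end IsGeodesicSegment

theorem infDist_le_of_mem_segment_to_nearest {g s : Set M} {x p q z : M} {ε : ℝ}
    (hz : z ∈ g) (hpz : dist p z = infDist p g) (hs : IsGeodesicSegment s p z) (hq : q ∈ s)
    (hxq : dist x q ≤ ε) (hpx : infDist p g ≤ infDist x g) (hp : p ∈ g ∨ 2 * ε < dist x p) :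
    infDist x g ≤ ε := by
  have hxz : infDist x g + dist x p ≤ 2 * ε + infDist p g := by
    linarith [hs.dist_add_dist hq, infDist_le_dist_of_mem hz (x := x), dist_triangle x q z,
      dist_triangle x q p, dist_comm q p]
  rcases hp with hp | hp
  · rw [infDist_zero_of_mem hp] at hxz
    linarith [infDist_le_dist_of_mem hp (x := x)]
  · linarith

def IsLocalGeodesic (k L : ℝ) (r : ℝ → M) : Prop :=
  ∀ s t : ℝ, 0 ≤ s → s ≤ t → t ≤ L → t - s ≤ k → dist (r s) (r t) = t - s

namespace IsLocalGeodesic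

variable {δ k L : ℝ} {r : ℝ → M}

theorem dist_eq_abs (hr : IsLocalGeodesic k L r) {u v : ℝ} (hu : u ∈ Icc 0 L) (hv : v ∈ Icc 0 L)
    (huv : |u - v| ≤ k) : dist (r u) (r v) = |u - v| := by
  rcases le_total u v with h | h
  · rw [abs_sub_comm, abs_of_nonneg (sub_nonneg.2 h)] at huv ⊢
    exact hr u v hu.1 h hv.2 huv
  · rw [abs_of_nonneg (sub_nonneg.2 h)] at huv ⊢
    rw [dist_comm]
    exact hr v u hv.1 h hu.2 huv

theorem continuousOn (hr : IsLocalGeodesic k L r) (hk : 0 < k) : ContinuousOn r (Icc 0 L) := by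
  rw [Metric.continuousOn_iff]
  intro u hu ε hε
  refine ⟨min ε k, lt_min hε hk, fun v hv hvu => ?_⟩
  rw [Real.dist_eq, lt_min_iff] at hvu
  rw [hr.dist_eq_abs hv hu hvu.2.le]
  exact hvu.1

theorem isGeodesicSegment (hr : IsLocalGeodesic k L r) {a b : ℝ} (ha : 0 ≤ a) (hab : a ≤ b)
    (hb : b ≤ L) (hba : b - a ≤ k) : IsGeodesicSegment (r '' Icc a b) (r a) (r b) :=
  isGeodesicSegment_image_Icc hab fun u hu v hv =>
    hr.dist_eq_abs ⟨ha.trans hu.1, hu.2.trans hb⟩ ⟨ha.trans hv.1, hv.2.trans hb⟩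
      (abs_sub_le_iff.2 ⟨by linarith [hu.2, hv.1], by linarith [hu.1, hv.2]⟩)

theorem infDist_le_of_isMaxOn (hδ : 0 ≤ δ) (hk : 8 * δ < k)
    (hgeod : ∀ x y : M, ∃ s : Set M, IsGeodesicSegment s x y) (hhyp : IsDeltaHyperbolic M δ)
    (hr : IsLocalGeodesic k L r) {s t u₀ : ℝ} {g : Set M}
    (hs : 0 ≤ s) (ht : t ≤ L) (hg : IsGeodesicSegment g (r s) (r t)) (hu₀ : u₀ ∈ Icc s t)
    (hmax : IsMaxOn (fun u => infDist (r u) g) (Icc s t) u₀) : infDist (r u₀) g ≤ 2 * δ := by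
  have hk₀ : 0 < k := by linarith
  by_contra! hfar
  set a := max s (u₀ - k / 2)
  set b := min t (u₀ + k / 2)
  have hsa : s ≤ a := le_max_left _ _
  have hau : a ≤ u₀ := max_le hu₀.1 (by linarith)
  have hub : u₀ ≤ b := le_min hu₀.2 (by linarith)
  have hbt : b ≤ t := min_le_left _ _
  have hba : b - a ≤ k := by linarith [le_max_right s (u₀ - k / 2), min_le_right t (u₀ + k / 2)]
  have ha_end : r a ∈ g ∨ 2 * (2 * δ) < dist (r u₀) (r a) := by
    rw [dist_comm, hr a u₀ (hs.trans hsa) hau (hu₀.2.trans ht) (by linarith)]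
    rcases max_cases s (u₀ - k / 2) with ⟨h, -⟩ | ⟨h, -⟩
    · rw [show a = s from h]
      exact .inl hg.left_mem
    · exact .inr (by linarith)
  have hb_end : r b ∈ g ∨ 2 * δ < dist (r u₀) (r b) := by
    rw [hr u₀ b (hs.trans (hsa.trans hau)) hub (hbt.trans ht) (by linarith)]
    rcases min_cases t (u₀ + k / 2) with ⟨h, -⟩ | ⟨h, -⟩
    · rw [show b = t from h]
      exact .inl hg.symm.left_mem
    · exact .inr (by linarith)
  obtain ⟨y, hy, hay⟩ := hg.isCompact.exists_infDist_eq_dist ⟨_, hg.left_mem⟩ (r a)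
  obtain ⟨z, hz, hbz⟩ := hg.isCompact.exists_infDist_eq_dist ⟨_, hg.left_mem⟩ (r b)
  obtain ⟨b₁, hb₁⟩ := hgeod (r b) z
  obtain ⟨c₁, hc₁⟩ := hgeod z (r a)
  obtain ⟨q₁, hq₁ | hq₁, hxq₁⟩ := hhyp (r a) (r b) z _ b₁ c₁
    (hr.isGeodesicSegment (hs.trans hsa) (hau.trans hub) (hbt.trans ht) hba) hb₁ hc₁
    (r u₀) ⟨u₀, ⟨hau, hub⟩, rfl⟩
  · exact hfar.not_ge <| (infDist_le_of_mem_segment_to_nearest hz hbz.symm hb₁ hq₁ hxq₁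
      (hmax ⟨hsa.trans (hau.trans hub), hbt⟩) hb_end).trans (by linarith)
  · -- close up with the triangle `z, r a, y` whose third side runs along `g`
    obtain ⟨c₂, hc₂g, hc₂⟩ := hg.exists_subsegment hy hz
    obtain ⟨b₂, hb₂⟩ := hgeod (r a) y
    obtain ⟨q₂, hq₂, hq₁q₂⟩ := hhyp z (r a) y c₁ b₂ c₂ hc₁ hb₂ hc₂ q₁ hq₁
    have hxq₂ : dist (r u₀) q₂ ≤ 2 * δ := by linarith [dist_triangle (r u₀) q₁ q₂]
    rcases hq₂ with hq₂ | hq₂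
    · exact hfar.not_ge <| infDist_le_of_mem_segment_to_nearest hy hay.symm hb₂ hq₂ hxq₂
        (hmax ⟨hsa, hau.trans hu₀.2⟩) ha_end
    · exact hfar.not_ge <| (infDist_le_dist_of_mem (hc₂g hq₂)).trans hxq₂

theorem infDist_le (hδ : 0 ≤ δ) (hk : 8 * δ < k)
    (hgeod : ∀ x y : M, ∃ s : Set M, IsGeodesicSegment s x y) (hhyp : IsDeltaHyperbolic M δ)
    (hr : IsLocalGeodesic k L r) {s t u : ℝ} {g : Set M} (hs : 0 ≤ s)
    (ht : t ≤ L) (hg : IsGeodesicSegment g (r s) (r t)) (hu : u ∈ Icc s t) :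
    infDist (r u) g ≤ 2 * δ := by
  have hcont : ContinuousOn (fun u => infDist (r u) g) (Icc s t) :=
    (continuous_infDist_pt g).comp_continuousOn
      ((hr.continuousOn (by linarith)).mono (Icc_subset_Icc hs ht))
  obtain ⟨u₀, hu₀, hmax⟩ := isCompact_Icc.exists_isMaxOn ⟨u, hu⟩ hcont
  exact (hmax hu).trans (infDist_le_of_isMaxOn hδ hk hgeod hhyp hr hs ht hg hu₀ hmax)

theorem sub_add_dist_le (hδ : 0 ≤ δ) (hk : 8 * δ < k)
    (hgeod : ∀ x y : M, ∃ s : Set M, IsGeodesicSegment s x y) (hhyp : IsDeltaHyperbolic M δ)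
    (hr : IsLocalGeodesic k L r) {s m t : ℝ} (hs : 0 ≤ s) (hsm : s ≤ m)
    (hmt : m ≤ t) (ht : t ≤ L) (hmk : m - s ≤ k) :
    m - s + dist (r m) (r t) ≤ dist (r s) (r t) + 4 * δ := by
  obtain ⟨g, hg⟩ := hgeod (r s) (r t)
  obtain ⟨q, hq, hmq⟩ := hg.isCompact.exists_infDist_eq_dist ⟨_, hg.left_mem⟩ (r m)
  have hmq' : dist (r m) q ≤ 2 * δ := hmq ▸ infDist_le hδ hk hgeod hhyp hr hs ht hg ⟨hsm, hmt⟩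
  linarith [hr s m hs hsm (hmt.trans ht) hmk, hg.dist_add_dist hq, dist_triangle (r s) q (r m),
    dist_triangle (r m) q (r t), dist_comm q (r m)]

end IsLocalGeodesic

end

theorem stmt_10_general (M : Type*) [MetricSpace M] (δ k : ℝ) (hδ : 0 ≤ δ) (hk : 8 * δ < k)
    (hgeod : ∀ x y : M, ∃ s : Set M, IsGeodesicSegment s x y)
    (hhyp : IsDeltaHyperbolic M δ)
    (r : ℝ → M) (L : ℝ)
    -- `r` is an arclength-parametrized `k`-local geodesic of length `L`:
    (hloc : ∀ s t : ℝ, 0 ≤ s → s ≤ t → t ≤ L → t - s ≤ k → dist (r s) (r t) = t - s) :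
    -- then `r` is a `(1/3, 2δ)`-quasi-geodesic:
    ∀ s t : ℝ, 0 ≤ s → s ≤ t → t ≤ L →
      (1 / 3) * (t - s) - 2 * δ ≤ dist (r s) (r t) := by
  have hr : IsLocalGeodesic k L r := hloc
  have hstep : 0 < 3 * k / 4 := by linarith
  intro s t hs hst ht
  obtain ⟨n, hn⟩ := exists_nat_ge ((t - s) / (3 * k / 4))
  rw [div_le_iff₀ hstep] at hn
  induction n generalizing s with
  | zero => linarith [dist_nonneg (x := r s) (y := r t)]
  | succ n ih =>
    by_cases hshort : t - s ≤ k
    · rw [hr s t hs hst ht hshort]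
      linarith
    have hm := ih (s + 3 * k / 4) (by linarith) (by linarith) (by push_cast at hn; linarith)
    have hcut := IsLocalGeodesic.sub_add_dist_le hδ hk hgeod hhyp hr (m := s + 3 * k / 4) hs
      (by linarith) (by linarith) ht (by linarith)
    linarith

theorem stmt_10 (M : Type*) [MetricSpace M] (δ k : ℝ) (hδ : 0 ≤ δ) (hk : 8 * δ < k)
    (hgeod : ∀ x y : M, ∃ s : Set M, IsGeodesicSegment s x y)
    (hhyp : IsDeltaHyperbolic M δ)
    (r : ℝ → M) (L : ℝ) (hL : 0 ≤ L)
    -- `r` is an arclength-parametrized `k`-local geodesic of length `L`: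
    (hloc : ∀ s t : ℝ, 0 ≤ s → s ≤ t → t ≤ L → t - s ≤ k → dist (r s) (r t) = t - s) :
    -- then `r` is a `(1/3, 2δ)`-quasi-geodesic:
    ∀ s t : ℝ, 0 ≤ s → s ≤ t → t ≤ L →
      (1 / 3) * (t - s) - 2 * δ ≤ dist (r s) (r t) :=
  stmt_10_general M δ k hδ hk hgeod hhyp r L hloc
end

section
/- Let F be a free group of rank at least 2 with basis containing a₁, a₂, and let v be a nontrivial element of F and n a positive integer. In the one-relator group H = ⟨a₁, a₂, … | vⁿ = 1⟩, the image of v has order exactly n. -/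
/-!
If a homomorphism `ψ` sends `v` to an element of infinite order commuting with the whole image,
then `vᵏ ∈ ⟨⟨vⁿ⟩⟩` forces `ψ v ^ k ∈ ⟨ψ v ^ n⟩`, hence `n ∣ k`.

Such a `ψ` is a truncated Magnus representation. Work modulo `X_c² = 0` and send each generator
`a` to `(1 + X_(a,tt))(1 + X_(a,ff))`, so that `a⁻¹` goes to `(1 - X_(a,ff))(1 - X_(a,tt))`.
The doubled word of a reduced `v` never repeats a letter consecutively and has coefficient `1`
in the image of `v`. Take a word `W` without consecutive repetitions, of minimal length among
those with a nonzero coefficient `c`. On the subwords of `W` each `X_d` acts by a square-zero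
matrix, and `v` acts by `1 + c E_(0,|W|)` because all shorter subwords have coefficient `0`;
this matrix commutes with every unitriangular matrix and has infinite order.
-/

open Subgroup in
theorem orderOf_mk_normalClosure_pow {G H : Type*} [Group G] [Group H] (ψ : G →* H) {g : G}
    (hcomm : ∀ x, Commute (ψ g) (ψ x)) (hg : ¬IsOfFinOrder (ψ g)) (n : ℕ) :
    orderOf (QuotientGroup.mk (s := normalClosure {g ^ n}) g) = n := by
  set K := (zpowers (ψ g ^ n)).comap ψ
  have : K.Normal := ⟨fun y hy x => by
    obtain ⟨m, hm⟩ := mem_zpowers_iff.1 hy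
    have hψy : ψ x * ψ y * (ψ x)⁻¹ = ψ y := by
      rw [← hm, ((hcomm x).pow_left n).zpow_left m |>.symm.eq, mul_inv_cancel_right]
    simpa [K, hψy] using hy⟩
  have hle : normalClosure {g ^ n} ≤ K :=
    normalClosure_le_normal (by simp [K, mem_zpowers])
  refine Nat.dvd_antisymm (orderOf_dvd_of_pow_eq_one ?_) ?_
  · rw [← QuotientGroup.mk_pow, QuotientGroup.eq_one_iff]
    exact subset_normalClosure rfl
  · have hk := hle <| (QuotientGroup.eq_one_iff _).1 <|
      (QuotientGroup.mk_pow _ _ _).trans (pow_orderOf_eq_one (QuotientGroup.mk g))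
    obtain ⟨m, hm⟩ := mem_zpowers_iff.1 hk
    rw [map_pow, ← zpow_natCast, ← zpow_mul, ← zpow_natCast] at hm
    exact Int.natCast_dvd_natCast.1 ⟨m, (injective_zpow_iff_not_isOfFinOrder.2 hg hm).symm⟩

theorem one_add_pow_of_mul_self_eq_zero {R : Type*} [Ring R] {Q : R} (hQ : Q * Q = 0) (k : ℕ) :
    (1 + Q) ^ k = 1 + k • Q := by
  induction k with
  | zero => simp
  | succ k ih =>
    rw [pow_succ, ih, add_mul, one_mul, mul_add, mul_one, smul_mul_assoc, hQ, smul_zero,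
      add_zero, succ_nsmul]
    abel

theorem not_isOfFinOrder_one_add {R : Type*} [Ring R] {Q : R} (hQ : Q * Q = 0)
    (h : ¬IsOfFinAddOrder Q) : ¬IsOfFinOrder (1 + Q) := by
  rw [isOfFinOrder_iff_pow_eq_one]
  rintro ⟨k, hk, hpow⟩
  rw [one_add_pow_of_mul_self_eq_zero hQ, add_eq_left] at hpow
  exact h (isOfFinAddOrder_iff_nsmul_eq_zero.2 ⟨k, hk, hpow⟩)

namespace Matrix

theorem commute_single_zero_last {R : Type*} [CommRing R] {m : ℕ}
    {M : Matrix (Fin (m + 1)) (Fin (m + 1)) R} (hM : M.BlockTriangular id)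
    (hdiag : M 0 0 = M (Fin.last m) (Fin.last m)) (c : R) :
    Commute (single 0 (Fin.last m) c) M := by
  ext i j
  by_cases hi : i = 0 <;> by_cases hj : j = Fin.last m
  · subst hi hj
    simp [hdiag, mul_comm]
  · subst hi
    rw [single_mul_apply_same, mul_single_apply_of_ne _ _ _ _ _ hj,
      show M (Fin.last m) j = 0 from hM (lt_of_le_of_ne (Fin.le_last j) hj), mul_zero]
  · subst hj
    rw [single_mul_apply_of_ne _ _ _ _ _ hi, mul_single_apply_same,
      show M i 0 = 0 from hM (Fin.pos_iff_ne_zero.2 hi), zero_mul]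
  · rw [single_mul_apply_of_ne _ _ _ _ _ hi, mul_single_apply_of_ne _ _ _ _ _ hj]

theorem not_isOfFinAddOrder_single {ι : Type*} [DecidableEq ι] (i j : ι) {c : ℤ} (hc : c ≠ 0) :
    ¬IsOfFinAddOrder (single i j c) := by
  rw [isOfFinAddOrder_iff_nsmul_eq_zero]
  rintro ⟨k, hk, h⟩
  have := congrFun (congrFun h i) j
  simp [hc] at this
  omega

end Matrix

namespace Magnus

section Words

variable {β : Type*} [DecidableEq β]

/-- The coefficient of the word `w` in the noncommutative product `∏_{(c, s) ∈ E} (1 + s X_c)`. -/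
def coeffProd : List (β × ℤ) → List β → ℤ
  | [], w => if w = [] then 1 else 0
  | (c, s) :: E, w => coeffProd E w + if w.head? = some c then s * coeffProd E w.tail else 0

@[simp]
theorem coeffProd_nil_right (E : List (β × ℤ)) : coeffProd E [] = 1 := by
  induction E with
  | nil => rfl
  | cons p E ih => simp [coeffProd, ih]

theorem coeffProd_eq_zero_of_length_lt {E : List (β × ℤ)} {w : List β}
    (h : E.length < w.length) : coeffProd E w = 0 := by
  induction E generalizing w with
  | nil => simpa [coeffProd, ← List.length_pos_iff] using h
  | cons p E ih =>
    obtain ⟨c, s⟩ := p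
    simp only [List.length_cons] at h
    rw [coeffProd, ih (by omega), ih (by simp; omega)]
    simp

theorem coeffProd_map_fst (E : List (β × ℤ)) :
    coeffProd E (E.map Prod.fst) = (E.map Prod.snd).prod := by
  induction E with
  | nil => rfl
  | cons p E ih => simp [coeffProd, ih, coeffProd_eq_zero_of_length_lt]

variable (W : List β)

def subwordCoeff (E : List (β × ℤ)) (i j : ℕ) : ℤ :=
  if i ≤ j then coeffProd E (W.extract i j) else 0

theorem subwordCoeff_self (E : List (β × ℤ)) (i : ℕ) : subwordCoeff W E i i = 1 := by
  simp [subwordCoeff, List.extract_eq_take_drop]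

theorem subwordCoeff_of_lt (E : List (β × ℤ)) {i j : ℕ} (h : j < i) : subwordCoeff W E i j = 0 :=
  if_neg (not_le.2 h)

theorem subwordCoeff_cons (c : β) (s : ℤ) (E : List (β × ℤ)) (i j : ℕ) :
    subwordCoeff W ((c, s) :: E) i j =
      subwordCoeff W E i j + s * if W[i]? = some c then subwordCoeff W E (i + 1) j else 0 := by
  rcases lt_trichotomy i j with hij | rfl | hij
  · have hhead : (W.extract i j).head? = W[i]? := by
      simp [List.extract_eq_take_drop, List.head?_take, List.head?_drop]
      omega
    have htail : (W.extract i j).tail = W.extract (i + 1) j := by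
      simp only [List.extract_eq_take_drop]
      rw [← List.tail_drop, ← List.drop_one, ← List.drop_one, List.drop_take]
      congr 1
    simp only [subwordCoeff, coeffProd, hhead, htail, if_pos hij.le, if_pos (Nat.succ_le_of_lt hij)]
    split_ifs <;> ring
  · simp [subwordCoeff, coeffProd]
  · have : ¬i + 1 ≤ j := by omega
    simp [subwordCoeff, this, not_le.2 hij]

/-- `X_c` acting on the subwords `W[i, j)` of `W`, indexed by their endpoints. -/
def letterMatrix (c : β) : Matrix (Fin (W.length + 1)) (Fin (W.length + 1)) ℤ :=
  Matrix.of fun i j => if W[(i : ℕ)]? = some c ∧ (j : ℕ) = i + 1 then 1 else 0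

theorem sum_letterMatrix_mul (c : β) (i : Fin (W.length + 1)) (F : ℕ → ℤ) :
    ∑ k, letterMatrix W c i k * F k = if W[(i : ℕ)]? = some c then F (i + 1) else 0 := by
  split_ifs with h
  · have hi : (i : ℕ) + 1 < W.length + 1 := by
      have := (List.getElem?_eq_some_iff.1 h).1
      omega
    rw [Finset.sum_eq_single ⟨i + 1, hi⟩]
    · simp [letterMatrix, h]
    · intro k _ hk
      simp only [letterMatrix, Matrix.of_apply, h, true_and]
      rw [if_neg (fun hk' => hk (Fin.ext hk')), zero_mul]
    · simp
  · exact Finset.sum_eq_zero fun k _ => by simp [letterMatrix, h]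

theorem letterMatrix_mul_self {W : List β} (hW : W.IsChain (· ≠ ·)) (c : β) :
    letterMatrix W c * letterMatrix W c = 0 := by
  ext i k
  refine (sum_letterMatrix_mul W c i fun j =>
    if W[j]? = some c ∧ (k : ℕ) = j + 1 then 1 else 0).trans ?_
  split_ifs with h1 h2 <;> try rfl
  obtain ⟨hi, rfl⟩ := List.getElem?_eq_some_iff.1 h1
  obtain ⟨hi', h⟩ := List.getElem?_eq_some_iff.1 h2.1
  exact absurd h.symm (hW.getElem i hi')

variable {W} in
def letterUnit (hW : W.IsChain (· ≠ ·)) (c : β) :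
    (Matrix (Fin (W.length + 1)) (Fin (W.length + 1)) ℤ)ˣ where
  val := 1 + letterMatrix W c
  inv := 1 - letterMatrix W c
  val_inv := by simp [mul_sub, add_mul, letterMatrix_mul_self hW]
  inv_val := by simp [sub_mul, mul_add, letterMatrix_mul_self hW]

def prodMatrix (E : List (β × ℤ)) : Matrix (Fin (W.length + 1)) (Fin (W.length + 1)) ℤ :=
  (E.map fun p => 1 + p.2 • letterMatrix W p.1).prod

theorem prodMatrix_cons (c : β) (s : ℤ) (E : List (β × ℤ)) :
    prodMatrix W ((c, s) :: E) = (1 + s • letterMatrix W c) * prodMatrix W E :=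
  List.prod_cons

theorem prodMatrix_append (E E' : List (β × ℤ)) :
    prodMatrix W (E ++ E') = prodMatrix W E * prodMatrix W E' := by
  simp [prodMatrix]

theorem prodMatrix_apply (E : List (β × ℤ)) (i j : Fin (W.length + 1)) :
    prodMatrix W E i j = subwordCoeff W E i j := by
  induction E generalizing i j with
  | nil =>
    have hj := j.is_lt
    simp only [prodMatrix, List.map_nil, List.prod_nil, Matrix.one_apply, subwordCoeff,
      coeffProd, List.extract_eq_take_drop, List.take_eq_nil_iff, List.drop_eq_nil_iff,
      Fin.ext_iff]
    split_ifs <;> omega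
  | cons p E ih =>
    obtain ⟨c, s⟩ := p
    have hsum := sum_letterMatrix_mul W c i fun k => subwordCoeff W E k j
    simp only [← ih] at hsum
    rw [prodMatrix_cons, add_mul, one_mul, smul_mul_assoc, Matrix.add_apply, Matrix.smul_apply,
      Matrix.mul_apply, hsum, ih, subwordCoeff_cons, smul_eq_mul]

variable {W} in
theorem prodMatrix_eq_one_add_single (hW : W.IsChain (· ≠ ·)) (hWne : W ≠ [])
    (E : List (β × ℤ)) (hmin : ∀ w : List β, w.IsChain (· ≠ ·) → w ≠ [] →
      w.length < W.length → coeffProd E w = 0) :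
    prodMatrix W E = 1 + Matrix.single 0 (Fin.last W.length) (coeffProd E W) := by
  have hlast : (0 : Fin (W.length + 1)) ≠ Fin.last W.length := by
    simpa [Fin.ext_iff, eq_comm] using hWne
  ext i j
  rw [prodMatrix_apply, Matrix.add_apply, Matrix.one_apply, Matrix.single_apply]
  rcases lt_trichotomy i j with hij | rfl | hij
  · by_cases hcorner : i = 0 ∧ j = Fin.last W.length
    · obtain ⟨rfl, rfl⟩ := hcorner
      simp [subwordCoeff, hlast, List.extract_eq_take_drop]
    rw [if_neg hij.ne, if_neg (fun h => hcorner ⟨h.1.symm, h.2.symm⟩), add_zero, subwordCoeff,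
      if_pos (show (i : ℕ) ≤ j from hij.le)]
    have hj := j.is_lt
    simp only [Fin.ext_iff, Fin.val_zero, Fin.val_last] at hcorner
    refine hmin _ (List.extract_eq_take_drop ▸ (hW.drop _).take _) ?_ ?_
    · simp [List.extract_eq_take_drop]
      omega
    · simp only [List.extract_eq_take_drop, List.length_take, List.length_drop]
      omega
  · rw [subwordCoeff_self, if_pos rfl, if_neg fun h => hlast (h.1.trans h.2.symm), add_zero]
  · rw [subwordCoeff_of_lt _ _ hij, if_neg hij.ne', if_neg fun h => ?_, add_zero]
    obtain ⟨rfl, rfl⟩ := h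
    exact absurd hij (not_lt.2 (Fin.le_last _))

end Words

variable {α : Type*}

def doubled (p : α × Bool) : List ((α × Bool) × ℤ) :=
  [p, (p.1, !p.2)].map fun c => (c, if p.2 then 1 else -1)

theorem prod_snd_flatMap_doubled (L : List (α × Bool)) :
    ((L.flatMap doubled).map Prod.snd).prod = 1 := by
  induction L with
  | nil => rfl
  | cons p L ih => obtain ⟨a, _ | _⟩ := p <;> simp [doubled, ih]

theorem map_fst_flatMap_doubled (L : List (α × Bool)) :
    (L.flatMap doubled).map Prod.fst = L.flatMap fun p => [p, (p.1, !p.2)] := by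
  simp [List.map_flatMap, doubled]

theorem isChain_ne_flatMap_pair : ∀ {L : List (α × Bool)}, FreeGroup.IsReduced L →
    (L.flatMap fun p => [p, (p.1, !p.2)]).IsChain (· ≠ ·)
  | [], _ => List.isChain_nil
  | [p], _ => by simp [Prod.ext_iff]
  | p :: q :: L, hL => by
    rw [FreeGroup.isReduced_cons_cons] at hL
    have h := isChain_ne_flatMap_pair hL.2
    simp only [List.flatMap_cons, List.cons_append, List.nil_append] at h ⊢
    refine List.IsChain.cons_cons (by simp [Prod.ext_iff]) (List.IsChain.cons_cons ?_ h)
    obtain ⟨a, b⟩ := p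
    obtain ⟨a', b'⟩ := q
    rintro ⟨⟩
    simp at hL

variable [DecidableEq α] {W : List (α × Bool)}

noncomputable def rep (hW : W.IsChain (· ≠ ·)) :
    FreeGroup α →* (Matrix (Fin (W.length + 1)) (Fin (W.length + 1)) ℤ)ˣ :=
  FreeGroup.lift fun a => letterUnit hW (a, true) * letterUnit hW (a, false)

theorem val_rep_mk (hW : W.IsChain (· ≠ ·)) (L : List (α × Bool)) :
    (rep hW (FreeGroup.mk L)).val = prodMatrix W (L.flatMap doubled) := by
  rw [rep, FreeGroup.lift_mk]
  induction L with
  | nil => rfl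
  | cons p L ih =>
    rw [List.map_cons, List.prod_cons, Units.val_mul, ih, List.flatMap_cons, prodMatrix_append]
    congr 1
    obtain ⟨a, _ | _⟩ := p <;> simp [doubled, prodMatrix, letterUnit, sub_eq_add_neg]

theorem val_rep_apply (hW : W.IsChain (· ≠ ·)) (x : FreeGroup α) (i j : Fin (W.length + 1)) :
    (rep hW x).val i j = subwordCoeff W (x.toWord.flatMap doubled) i j := by
  rw [← prodMatrix_apply, ← val_rep_mk, FreeGroup.mk_toWord]

theorem exists_val_rep_eq_one_add_single {v : FreeGroup α} (hv : v ≠ 1) :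
    ∃ (W : List (α × Bool)) (hW : W.IsChain (· ≠ ·)) (c : ℤ), W ≠ [] ∧ c ≠ 0 ∧
      (rep hW v).val = 1 + Matrix.single 0 (Fin.last W.length) c := by
  set E := v.toWord.flatMap doubled
  set S := {w : List (α × Bool) | w.IsChain (· ≠ ·) ∧ w ≠ [] ∧ coeffProd E w ≠ 0}
  have hV : E.map Prod.fst ∈ S := by
    refine ⟨?_, ?_, ?_⟩
    · rw [map_fst_flatMap_doubled]
      exact isChain_ne_flatMap_pair FreeGroup.isReduced_toWord
    · rw [map_fst_flatMap_doubled, Ne, List.flatMap_eq_nil_iff]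
      simpa [← List.eq_nil_iff_forall_not_mem, FreeGroup.toWord_eq_nil_iff] using hv
    · rw [coeffProd_map_fst, prod_snd_flatMap_doubled]
      exact one_ne_zero
  obtain ⟨W, ⟨hW, hWne, hc⟩, hmin⟩ := (measure List.length).wf.has_min S ⟨_, hV⟩
  refine ⟨W, hW, coeffProd E W, hWne, hc, ?_⟩
  rw [← FreeGroup.mk_toWord (x := v), val_rep_mk]
  exact prodMatrix_eq_one_add_single hW hWne E fun w hw hne hlt =>
    not_not.1 fun h => hmin w ⟨hw, hne, h⟩ hlt

end Magnus

theorem FreeGroup.exists_commute_not_isOfFinOrder {α : Type*} {v : FreeGroup α} (hv : v ≠ 1) :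
    ∃ (m : ℕ) (ψ : FreeGroup α →* (Matrix (Fin (m + 1)) (Fin (m + 1)) ℤ)ˣ),
      (∀ x, Commute (ψ v) (ψ x)) ∧ ¬IsOfFinOrder (ψ v) := by
  classical
  obtain ⟨W, hW, c, hWne, hc, hrep⟩ := Magnus.exists_val_rep_eq_one_add_single hv
  have hlast : Fin.last W.length ≠ 0 := by simpa [Fin.ext_iff] using hWne
  refine ⟨W.length, Magnus.rep hW, fun x => Units.ext ?_, ?_⟩
  · have htri : (Magnus.rep hW x).val.BlockTriangular id := fun i j hji => by
      rw [Magnus.val_rep_apply]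
      exact Magnus.subwordCoeff_of_lt _ _ hji
    have hdiag : (Magnus.rep hW x).val 0 0 = (Magnus.rep hW x).val (Fin.last _) (Fin.last _) := by
      rw [Magnus.val_rep_apply, Magnus.val_rep_apply, Magnus.subwordCoeff_self,
        Magnus.subwordCoeff_self]
    rw [Units.val_mul, Units.val_mul, hrep]
    exact ((Commute.one_left _).add_left (Matrix.commute_single_zero_last htri hdiag c)).eq
  · rw [← Units.isOfFinOrder_val, hrep]
    exact not_isOfFinOrder_one_add (Matrix.single_mul_single_of_ne c 0 _ _ hlast c)
      (Matrix.not_isOfFinAddOrder_single _ _ hc)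

theorem stmt_18_general (α : Type*)
    (v : FreeGroup α) (hv : v ≠ 1) (n : ℕ) :
    orderOf (QuotientGroup.mk (s := Subgroup.normalClosure {v ^ n}) v) = n := by
  obtain ⟨m, ψ, hcomm, hinf⟩ := FreeGroup.exists_commute_not_isOfFinOrder hv
  exact orderOf_mk_normalClosure_pow ψ hcomm hinf n

theorem stmt_18 (α : Type*) (a₁ a₂ : α) (hrank : a₁ ≠ a₂)
    (v : FreeGroup α) (hv : v ≠ 1) (n : ℕ) (hn : 0 < n) :
    orderOf (QuotientGroup.mk (s := Subgroup.normalClosure {v ^ n}) v) = n :=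
  stmt_18_general α v hv n
end
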